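/- arXiv:1205.2938 — 7 statements merged into one kernel-verified Lean document; each statement's English description precedes it below -/
import Mathlib

section
/- Let H be a Hilbert space, F : H → H a continuous linear operator with closed range and finite-dimensional kernel, and L ⊆ H a closed subspace. For any index type ι, let T : ℓ²(ι, H) → ℓ²(ι, H) be the continuous linear operator acting componentwise by T(x)ᵢ = F(xᵢ). Then the image under T of the closed subspace {x ∈ ℓ²(ι, H) : xᵢ ∈ L for all i} is a closed subspace of ℓ²(ι, H). -/
/-! A closed-range operator with finite-dimensional kernel maps every closed subspace `L` onto a
closed set `F(L)`, and by the open mapping theorem each `y ∈ F(L)` has a preimage in `L` of norm at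
most `C‖y‖` with `C` uniform. This lets a square-summable family with entries in `F(L)` be lifted
entrywise to a square-summable family in `L`, so the image of `L ⊗ ℓ²` is the set of families
with all entries in `F(L)`: an intersection of preimages of a closed set under the evaluations. -/

open scoped ENNReal

section SemiFredholm

variable {𝕜 E F : Type*} [NormedAddCommGroup E] [CompleteSpace E]
  [NormedAddCommGroup F] [CompleteSpace F]

/-- Split off a closed complement `K` of `ker f`: on `K`, `f` is injective with closed range,
hence a closed embedding, and `f '' L` is the image of the closed set `K ∩ (L ⊔ ker f)`. -/
theorem ContinuousLinearMap.isClosed_image_of_isClosed_range_of_finiteDimensional_ker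
    [RCLike 𝕜] [NormedSpace 𝕜 E] [NormedSpace 𝕜 F] (f : E →L[𝕜] F)
    (hrange : IsClosed (Set.range f)) (hker : FiniteDimensional 𝕜 (LinearMap.ker (f : E →ₗ[𝕜] F)))
    {L : Submodule 𝕜 E} (hL : IsClosed (L : Set E)) : IsClosed (f '' L) := by
  set N := LinearMap.ker (f : E →ₗ[𝕜] F)
  obtain ⟨P, hP⟩ := Submodule.ClosedComplemented.of_finiteDimensional N
  set K := LinearMap.ker (P : E →ₗ[𝕜] N)
  have : CompleteSpace K := P.isClosed_ker.completeSpace_coe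
  set g := f.comp K.subtypeL
  have hsplit : ∀ x, x - P x ∈ K ∧ f (x - P x) = f x := fun x =>
    ⟨by simp [K, hP], by rw [map_sub, show f (P x) = 0 from (P x).2, sub_zero]⟩
  have hinj : Function.Injective g := by
    refine (injective_iff_map_eq_zero g).2 fun k hk => ?_
    have : P k = 0 := LinearMap.mem_ker.1 k.2
    rw [hP ⟨k, hk⟩] at this
    simpa using congrArg Subtype.val this
  have hrange' : Set.range g = Set.range f := by
    refine Set.Subset.antisymm (fun _ ⟨k, hk⟩ => ⟨k, hk⟩) ?_
    rintro _ ⟨x, rfl⟩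
    exact ⟨⟨x - P x, (hsplit x).1⟩, (hsplit x).2⟩
  obtain ⟨c, hc⟩ := g.antilipschitz_of_injective_of_isClosed_range hinj (hrange' ▸ hrange)
  have himage : f '' L = g '' (((↑) : K → E) ⁻¹' (L ⊔ N : Submodule 𝕜 E)) := by
    ext y
    constructor
    · rintro ⟨x, hx, rfl⟩
      exact ⟨⟨x - (P x : E), (hsplit x).1⟩, Submodule.sub_mem _ (Submodule.mem_sup_left hx)
        (Submodule.mem_sup_right (P x).2), (hsplit x).2⟩
    · rintro ⟨k, hk, rfl⟩
      obtain ⟨l, hl, n, hn, hln⟩ := Submodule.mem_sup.1 hk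
      refine ⟨l, hl, ?_⟩
      change f l = f k
      rw [← hln, map_add, show f n = 0 from hn, add_zero]
  rw [himage]
  exact (hc.isClosedEmbedding g.uniformContinuous).isClosedMap _
    ((L.isClosed_sup_finiteDimensional N hL).preimage continuous_subtype_val)

theorem ContinuousLinearMap.exists_preimage_norm_le_of_isClosed_image [NontriviallyNormedField 𝕜]
    [NormedSpace 𝕜 E] [NormedSpace 𝕜 F] (f : E →L[𝕜] F) {L : Submodule 𝕜 E}
    (hL : IsClosed (L : Set E)) (himage : IsClosed (f '' L)) :
    ∃ C > 0, ∀ y ∈ f '' L, ∃ x ∈ L, f x = y ∧ ‖x‖ ≤ C * ‖y‖ := by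
  set S := L.map (f : E →ₗ[𝕜] F)
  have : CompleteSpace L := hL.completeSpace_coe
  have : CompleteSpace S := (show IsClosed (S : Set F) from himage).completeSpace_coe
  set g : L →L[𝕜] S := (f.comp L.subtypeL).codRestrict S fun x => ⟨x, x.2, rfl⟩
  have hg : Function.Surjective g := by
    rintro ⟨_, x, hx, rfl⟩
    exact ⟨⟨x, hx⟩, rfl⟩
  obtain ⟨C, hC, hpre⟩ := g.exists_preimage_norm_le hg
  refine ⟨C, hC, ?_⟩
  rintro _ ⟨x, hx, rfl⟩
  obtain ⟨z, hz, hzC⟩ := hpre ⟨f x, x, hx, rfl⟩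
  exact ⟨z, z.2, congrArg Subtype.val hz, hzC⟩

end SemiFredholm

namespace lp

variable {ι : Type*} {p : ℝ≥0∞}

theorem isClosed_setOf_forall_mem {E : ι → Type*} [∀ i, NormedAddCommGroup (E i)] [Fact (1 ≤ p)]
    {S : ∀ i, Set (E i)} (hS : ∀ i, IsClosed (S i)) : IsClosed {x : lp E p | ∀ i, x i ∈ S i} := by
  simp only [Set.ofPred_forall]
  exact isClosed_iInter fun i => (hS i).preimage (lipschitzWith_one_eval p i).continuous

theorem image_setOf_forall_mem {E F : Type*} [NormedAddCommGroup E] [NormedAddCommGroup F]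
    {f : E → F} {A : Set E} {C : ℝ} (hf : ∀ y ∈ f '' A, ∃ x ∈ A, f x = y ∧ ‖x‖ ≤ C * ‖y‖)
    {T : lp (fun _ : ι => E) p → lp (fun _ : ι => F) p} (hT : ∀ x i, T x i = f (x i)) :
    T '' {x | ∀ i, x i ∈ A} = {y | ∀ i, y i ∈ f '' A} := by
  ext y
  constructor
  · rintro ⟨x, hx, rfl⟩ i
    exact hT x i ▸ Set.mem_image_of_mem f (hx i)
  · intro hy
    choose x hxA hfx hxC using fun i => hf _ (hy i)
    have hx : Memℓp x p := ((lp.memℓp y).norm.const_mul C).mono hxC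
    refine ⟨⟨x, hx⟩, hxA, lp.ext (funext fun i => ?_)⟩
    exact (hT _ i).trans (hfx i)

end lp

/-- Corollary 2.1: if `F` has closed range and finite-dimensional kernel, then the
componentwise operator `F ⊗ 1` on `ℓ²(ι, H)` maps the closed subspace
`{x | ∀ i, x i ∈ L}` (i.e. `L ⊗ ℓ²(ι)`) onto a closed subspace. -/
theorem closed_image_componentwise_of_closedRange_finiteDim_ker
    {𝕜 : Type*} [RCLike 𝕜] {H : Type*} [NormedAddCommGroup H]
    [InnerProductSpace 𝕜 H] [CompleteSpace H]
    (F : H →L[𝕜] H) (hrange : IsClosed (Set.range F))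
    (hker : FiniteDimensional 𝕜 (LinearMap.ker (F : H →ₗ[𝕜] H)))
    (L : Submodule 𝕜 H) (hL : IsClosed (L : Set H))
    (ι : Type*)
    (T : lp (fun _ : ι => H) 2 →L[𝕜] lp (fun _ : ι => H) 2)
    (hT : ∀ (x : lp (fun _ : ι => H) 2) (i : ι), (T x : ∀ _ : ι, H) i = F ((x : ∀ _ : ι, H) i)) :
    IsClosed (T '' {x : lp (fun _ : ι => H) 2 | ∀ i, (x : ∀ _ : ι, H) i ∈ L}) := by
  have himage := F.isClosed_image_of_isClosed_range_of_finiteDimensional_ker hrange hker hL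
  obtain ⟨C, -, hC⟩ := F.exists_preimage_norm_le_of_isClosed_image hL himage
  have hTimage := lp.image_setOf_forall_mem hC hT
  simp only [SetLike.mem_coe] at hTimage
  rw [hTimage]
  exact lp.isClosed_setOf_forall_mem fun _ => himage
end

section
/- The finite-dimensionality hypothesis in the closed-image lemma is necessary: let H = ℓ²(ℕ, ℝ) with standard orthonormal basis (eᵢ), let a : ℕ → ℝ satisfy aᵢ > 0 for all i and aᵢ → 0, let F : H × H → H be the (bounded, surjective) projection F(x, y) = x, and let L ⊆ H × H be the closed linear span of the vectors wᵢ = (aᵢ eᵢ, eᵢ), i ∈ ℕ. Then L is a closed subspace, F is a surjective continuous linear map, and yet the image F(L) is NOT a closed subspace of H. -/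
/-!
Each `wᵢ` satisfies the closed coordinatewise condition `xⱼ = aⱼ yⱼ`, so every `(x, y) ∈ L` has
`x = a · y` with `y ∈ ℓ²`. On the other hand `F(L)` contains every `eᵢ = F(aᵢ⁻¹ wᵢ)`, hence is
dense, and if it were closed it would be all of `ℓ²`. But along an infinite set `s` with
`∑_{i ∈ s} |aᵢ| < ∞` the vector `x = 1_s · a` lies in `ℓ²`, while `x = a · y` forces `y = 1` on
`s`, so `y ∉ ℓ²`.
-/

open Filter Topology Set Submodule
open scoped ENNReal

theorem exists_infinite_memℓp_indicator {E : Type*} [NormedAddCommGroup E] {a : ℕ → E}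
    (ha : Tendsto a atTop (𝓝 0)) :
    ∃ s : Set ℕ, s.Infinite ∧ Memℓp (s.indicator a) 1 := by
  obtain ⟨φ, hφ, hφa⟩ : ∃ φ : ℕ → ℕ, StrictMono φ ∧ ∀ k, ‖a (φ k)‖ ≤ (1 / 2 : ℝ) ^ k :=
    extraction_forall_of_eventually fun k =>
      (tendsto_zero_iff_norm_tendsto_zero.1 ha).eventually_le_const (by positivity)
  refine ⟨range φ, infinite_range_of_injective hφ.injective, memℓp_gen ?_⟩
  have hnorm : ∀ k, ‖(range φ).indicator a (φ k)‖ = ‖a (φ k)‖ := fun k => by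
    rw [indicator_of_mem (mem_range_self k)]
  simp only [ENNReal.toReal_one, Real.rpow_one]
  refine (hφ.injective.summable_iff fun i hi => by simp [indicator_of_notMem hi]).1 ?_
  exact summable_geometric_two.of_nonneg_of_le (fun k => norm_nonneg _)
    fun k => (hnorm k).trans_le (hφa k)

namespace lp

section

variable {ι : Type*} {E : ι → Type*} [∀ i, NormedAddCommGroup (E i)] {p : ℝ≥0∞}

theorem tendsto_norm_apply_cofinite (hp : 0 < p.toReal) (f : lp E p) :
    Tendsto (fun i => ‖f i‖) cofinite (𝓝 0) := by
  have h := ((lp.memℓp f).summable hp).tendsto_cofinite_zero.rpow_const (p := p.toReal⁻¹)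
    (Or.inr (inv_nonneg.2 hp.le))
  rw [Real.zero_rpow (inv_ne_zero hp.ne')] at h
  exact h.congr fun i => Real.rpow_rpow_inv (norm_nonneg _) hp.ne'

theorem continuous_apply [Fact (1 ≤ p)] (i : ι) : Continuous fun f : lp E p => f i :=
  (_root_.continuous_apply i).comp lp.uniformContinuous_coe.continuous

end

variable {ι 𝕜 : Type*} [NormedField 𝕜] {p : ℝ≥0∞}

theorem dense_span_single_one [DecidableEq ι] [Fact (1 ≤ p)] (hp : p ≠ ∞) :
    Dense (span 𝕜 (range fun i => lp.single p i (1 : 𝕜) : Set (lp (fun _ : ι => 𝕜) p)) :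
      Set (lp (fun _ : ι => 𝕜) p)) := by
  intro x
  refine mem_closure_of_tendsto (lp.hasSum_single hp x) (Eventually.of_forall fun s => ?_)
  refine sum_mem fun i _ => ?_
  rw [← mul_one (x i), ← smul_eq_mul, lp.single_smul]
  exact smul_mem _ _ (subset_span (mem_range_self i))

def diagonalGraph (p : ℝ≥0∞) (a : ι → 𝕜) :
    Submodule 𝕜 (lp (fun _ : ι => 𝕜) p × lp (fun _ : ι => 𝕜) p) where
  carrier := {z | ∀ i, z.1 i = a i * z.2 i}
  add_mem' {z w} hz hw i := by simp [hz i, hw i, mul_add]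
  zero_mem' i := by simp
  smul_mem' c z hz i := by simp [hz i, mul_left_comm]

theorem isClosed_diagonalGraph [Fact (1 ≤ p)] (a : ι → 𝕜) :
    IsClosed (diagonalGraph p a : Set (lp (fun _ : ι => 𝕜) p × lp (fun _ : ι => 𝕜) p)) := by
  show IsClosed {z : lp (fun _ : ι => 𝕜) p × lp (fun _ : ι => 𝕜) p | ∀ i, z.1 i = a i * z.2 i}
  rw [ofPred_forall]
  exact isClosed_iInter fun i => isClosed_eq ((continuous_apply i).comp continuous_fst)
    (continuous_const.mul ((continuous_apply i).comp continuous_snd))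

theorem smul_single_mem_diagonalGraph [DecidableEq ι] (a : ι → 𝕜) (i : ι) (c : 𝕜) :
    (a i • lp.single p i c, lp.single p i c) ∈ diagonalGraph p a := by
  intro j
  rcases eq_or_ne j i with rfl | hj
  · simp
  · simp [hj]

theorem exists_forall_mem_diagonalGraph_fst_ne [Fact (1 ≤ p)] (hp : p ≠ ∞) {a : ℕ → 𝕜}
    (ha : ∀ i, a i ≠ 0) (ha0 : Tendsto a atTop (𝓝 0)) :
    ∃ x : lp (fun _ : ℕ => 𝕜) p, ∀ z ∈ diagonalGraph p a, z.1 ≠ x := by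
  obtain ⟨s, hs, hsa⟩ := exists_infinite_memℓp_indicator ha0
  refine ⟨⟨s.indicator a, hsa.of_exponent_ge Fact.out⟩, ?_⟩
  intro z hz hzx
  have hz_one : ∀ i ∈ s, z.2 i = 1 := fun i hi => by
    have h := hz i
    rw [hzx] at h
    exact (mul_eq_left₀ (ha i)).1 (h.symm.trans (indicator_of_mem hi a))
  have hp_pos : 0 < p.toReal := ENNReal.toReal_pos (zero_lt_one.trans_le Fact.out).ne' hp
  have hdecay := (tendsto_norm_apply_cofinite hp_pos z.2).eventually (gt_mem_nhds one_pos)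
  exact hs ((eventually_cofinite.1 hdecay).subset fun i hi => by simp [hz_one i hi])

end lp

/-- Remark 2.3: the finite-dimensionality of the kernel is necessary. With
`H = ℓ²(ℕ, ℝ)`, `F : H × H → H` the first projection, and `L` the closed span of the
vectors `wᵢ = (aᵢ eᵢ, eᵢ)` where `aᵢ > 0` and `aᵢ → 0`, the subspace `L` is closed and
`F` is a surjective bounded operator, yet `F(L)` is not closed. -/
theorem proj_image_of_closed_span_not_closed
    (a : ℕ → ℝ) (ha : ∀ i, 0 < a i)
    (ha0 : Filter.Tendsto a Filter.atTop (nhds 0)) :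
    ∀ (e : ℕ → lp (fun _ : ℕ => ℝ) 2), (∀ i, e i = lp.single 2 i (1 : ℝ)) →
    ∀ (F : (lp (fun _ : ℕ => ℝ) 2) × (lp (fun _ : ℕ => ℝ) 2) →L[ℝ] lp (fun _ : ℕ => ℝ) 2),
      F = ContinuousLinearMap.fst ℝ _ _ →
    ∀ (w : ℕ → (lp (fun _ : ℕ => ℝ) 2) × (lp (fun _ : ℕ => ℝ) 2)),
      (∀ i, w i = (a i • e i, e i)) →
    ∀ (L : Submodule ℝ ((lp (fun _ : ℕ => ℝ) 2) × (lp (fun _ : ℕ => ℝ) 2))),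
      L = (Submodule.span ℝ (Set.range w)).topologicalClosure →
      IsClosed (L : Set ((lp (fun _ : ℕ => ℝ) 2) × (lp (fun _ : ℕ => ℝ) 2))) ∧
      Function.Surjective F ∧
      ¬ IsClosed (F '' (L : Set ((lp (fun _ : ℕ => ℝ) 2) × (lp (fun _ : ℕ => ℝ) 2)))) := by
  rintro e he F rfl w hw L rfl
  obtain rfl : e = fun i => lp.single 2 i 1 := funext he
  refine ⟨isClosed_topologicalClosure _, fun x => ⟨(x, 0), rfl⟩, fun hclosed => ?_⟩
  have hL_le : (span ℝ (range w)).topologicalClosure ≤ lp.diagonalGraph 2 a :=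
    topologicalClosure_minimal _
      (span_le.2 (range_subset_iff.2 fun i => hw i ▸ lp.smul_single_mem_diagonalGraph a i 1))
      (lp.isClosed_diagonalGraph a)
  have hsingle_le : span ℝ (range fun i => lp.single 2 i (1 : ℝ)) ≤
      (span ℝ (range w)).topologicalClosure.map (LinearMap.fst ℝ _ _) :=
    span_le.2 <| range_subset_iff.2 fun i =>
      ⟨(a i)⁻¹ • w i, smul_mem _ _ (le_topologicalClosure _ (subset_span (mem_range_self i))),
        by simp [hw, smul_smul, (ha i).ne']⟩
  have himage_dense := (lp.dense_span_single_one (p := 2) (by norm_num)).mono hsingle_le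
  obtain ⟨x, hx⟩ := lp.exists_forall_mem_diagonalGraph_fst_ne (p := 2) (by norm_num)
    (fun i => (ha i).ne') ha0
  obtain ⟨z, hzL, hzx⟩ := hclosed.closure_subset (himage_dense x)
  exact hx z (hL_le hzL) hzx
end

section
/- Let n ≥ 1 and let f : ℝ → ℝ be differentiable with 0 ≤ −f′(s) < π for every s ∈ ℝ. Let x : ℝ → ℂⁿ satisfy ẋ(t) = (2 · f′(‖x(t)‖²)) • (i · x(t)) for all t, and suppose x is not constant. Then every return time is greater than 1: if T > 0 and x(T) = x(0), then T > 1. -/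
/-!
The vector field `x ↦ 2 f′(‖x‖²) · i x` is tangent to the spheres `‖x‖ = const`, so along a
solution `f′(‖x‖²)` is a constant `a` and the equation is linear: `x(t) = exp(2 a t i) · x(0)`.
A nonconstant solution has `a ≠ 0` and `x(0) ≠ 0`, so a return at time `T` forces
`2 a T ∈ 2πℤ \ {0}`, i.e. `2 |a| T ≥ 2π`; since `|a| < π` this gives `T > 1`.
-/

open Complex

theorem norm_eq_of_hasDerivAt_eq_smul_I_smul {E : Type*} [NormedAddCommGroup E]
    [InnerProductSpace ℂ E] {x : ℝ → E} {g : ℝ → ℝ}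
    (hx : ∀ t, HasDerivAt x (g t • I • x t) t) (t s : ℝ) : ‖x t‖ = ‖x s‖ := by
  have hderiv : ∀ t, HasDerivAt (fun t => inner ℂ (x t) (x t)) 0 t := by
    intro t
    refine ((hx t).inner ℂ (hx t)).congr_deriv ?_
    rw [← coe_smul, inner_smul_left, inner_smul_right, inner_smul_left, inner_smul_right]
    simp
  have hconst : inner ℂ (x t) (x t) = inner ℂ (x s) (x s) :=
    is_const_of_deriv_eq_zero (fun t => (hderiv t).differentiableAt)
      (fun t => (hderiv t).deriv) t s
  have hsq : ‖x t‖ ^ 2 = ‖x s‖ ^ 2 := by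
    rw [inner_self_eq_norm_sq_to_K, inner_self_eq_norm_sq_to_K] at hconst
    exact_mod_cast hconst
  exact (pow_left_inj₀ (norm_nonneg _) (norm_nonneg _) two_ne_zero).1 hsq

theorem eq_exp_mul_smul_of_hasDerivAt_eq_smul {E : Type*} [NormedAddCommGroup E]
    [NormedSpace ℂ E] {x : ℝ → E} {c : ℂ} (hx : ∀ t, HasDerivAt x (c • x t) t) (t : ℝ) :
    x t = exp (c * t) • x 0 := by
  have hderiv : ∀ t : ℝ, HasDerivAt (fun t : ℝ => exp (-c * t) • x t) 0 t := by
    intro t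
    have hexp : HasDerivAt (fun t : ℝ => exp (-c * t)) (exp (-c * t) * -c) t := by
      simpa using ((hasDerivAt_id (t : ℂ)).const_mul (-c)).cexp.comp_ofReal
    refine (hexp.smul (hx t)).congr_deriv ?_
    rw [smul_smul, ← add_smul, mul_neg, add_neg_cancel, zero_smul]
  have hconst : exp (-c * t) • x t = exp (-c * 0) • x 0 :=
    is_const_of_deriv_eq_zero (fun t => (hderiv t).differentiableAt)
      (fun t => (hderiv t).deriv) t 0
  rw [mul_zero, exp_zero, one_smul] at hconst
  rw [← hconst, smul_smul, ← exp_add]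
  simp

theorem two_pi_le_abs_of_exp_mul_I_eq_one {θ : ℝ} (h : exp (θ * I) = 1) (hθ : θ ≠ 0) :
    2 * Real.pi ≤ |θ| := by
  obtain ⟨k, hk⟩ := Circle.exp_eq_one.1 (Circle.ext_iff.2 h)
  have hk0 : k ≠ 0 := by rintro rfl; simp_all
  rw [hk, abs_mul, abs_of_pos Real.two_pi_pos, ← Int.cast_abs]
  exact le_mul_of_one_le_left Real.two_pi_pos.le (by exact_mod_cast Int.one_le_abs hk0)

theorem radial_hamiltonian_period_gt_one_general
    (n : ℕ) (f : ℝ → ℝ)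
    (hf' : ∀ s : ℝ, 0 ≤ -deriv f s ∧ -deriv f s < Real.pi)
    (x : ℝ → EuclideanSpace ℂ (Fin n))
    (hx : ∀ t : ℝ, HasDerivAt x ((2 * deriv f (‖x t‖ ^ 2)) • (Complex.I • x t)) t)
    (hnc : ¬ ∀ t s : ℝ, x t = x s)
    (T : ℝ) (hT : 0 < T) (hret : x T = x 0) : 1 < T := by
  set c := 2 * deriv f (‖x 0‖ ^ 2)
  have hnorm := norm_eq_of_hasDerivAt_eq_smul_I_smul hx
  have hlin : ∀ t, HasDerivAt x ((c * I : ℂ) • x t) t := fun t => by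
    rw [mul_smul, coe_smul]
    simpa only [hnorm t 0] using hx t
  have hsol : ∀ t : ℝ, x t = exp ((c * t : ℝ) * I) • x 0 := fun t => by
    rw [eq_exp_mul_smul_of_hasDerivAt_eq_smul hlin t]
    congr 2
    push_cast
    ring
  have hx0 : x 0 ≠ 0 := fun h => hnc fun t s => by rw [hsol t, hsol s, h, smul_zero, smul_zero]
  have hc : c ≠ 0 := fun h => hnc fun t s => by simp [hsol t, hsol s, h]
  have hexp : exp ((c * T : ℝ) * I) = 1 :=
    smul_left_injective ℂ hx0 (by dsimp only; rw [one_smul, ← hsol T, hret])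
  have hperiod := two_pi_le_abs_of_exp_mul_I_eq_one hexp (mul_ne_zero hc hT.ne')
  rw [abs_mul, abs_of_pos hT, abs_of_nonpos (by linarith [hf' (‖x 0‖ ^ 2)])] at hperiod
  nlinarith [hf' (‖x 0‖ ^ 2)]

/-- Lemma 4.2 admissibility computation (Hofer–Zehnder): for the radial Hamiltonian
`F(x) = f(‖x‖²)` on `ℂⁿ` with `0 ≤ −f′ < π`, every nonconstant solution of the
Hamiltonian system that returns to its initial value at a time `T > 0` has `T > 1`. -/
theorem radial_hamiltonian_period_gt_one
    (n : ℕ) (hn : 1 ≤ n) (f : ℝ → ℝ) (hf : Differentiable ℝ f)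
    (hf' : ∀ s : ℝ, 0 ≤ -deriv f s ∧ -deriv f s < Real.pi)
    (x : ℝ → EuclideanSpace ℂ (Fin n))
    (hx : ∀ t : ℝ, HasDerivAt x ((2 * deriv f (‖x t‖ ^ 2)) • (Complex.I • x t)) t)
    (hnc : ¬ ∀ t s : ℝ, x t = x s)
    (T : ℝ) (hT : 0 < T) (hret : x T = x 0) : 1 < T :=
  radial_hamiltonian_period_gt_one_general n f hf' x hx hnc T hT hret
end

section
/- For every c ≥ 0 and δ > 0 there exists τ > 0 with the following property. Let H be a real Hilbert space, p ∈ H, and γ : ℝ → H a continuously differentiable curve such that ∫₀¹ ‖γ′(t)‖² dt ≤ c and ∫₀¹ ‖γ(t) − p‖² dt ≤ τ². Then the image γ([0,1]) has diameter at most δ, i.e. ‖γ(s) − γ(t)‖ ≤ δ for all s, t ∈ [0,1]. The constant τ depends only on c and δ, not on H, p, or γ. -/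
/-!
By Cauchy–Schwarz, `‖γ y - γ x‖² ≤ |y - x| ∫ ‖γ'‖²`, so on a window of length `h` inside `[0, 1]`
the curve moves by at most `√(h c)`. The same window contains a point where `‖γ - p‖²` is at most
its mean, hence at most `τ² / h`. Taking `h ≈ δ² / c` and `τ ≈ δ √h` makes both quantities at most
`δ / 4`, so every point of `γ([0, 1])` lies within `δ / 2` of `p`.
-/

open MeasureTheory Set intervalIntegral

theorem sq_intervalIntegral_le_mul_intervalIntegral_sq {f : ℝ → ℝ} {a b : ℝ} (hab : a ≤ b)
    (hf : IntervalIntegrable f volume a b)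
    (hf2 : IntervalIntegrable (fun t => f t ^ 2) volume a b) :
    (∫ t in a..b, f t) ^ 2 ≤ (b - a) * ∫ t in a..b, f t ^ 2 := by
  rcases hab.eq_or_lt with rfl | hab
  · simp
  have hvol : volume (uIoc a b) ≠ 0 := by simp [Real.volume_uIoc, sub_ne_zero.2 hab.ne']
  have jensen : (⨍ t in a..b, f t) ^ 2 ≤ ⨍ t in a..b, f t ^ 2 :=
    even_two.convexOn_pow.map_set_average_le (continuous_pow 2).continuousOn isClosed_univ hvol
      (by simp [Real.volume_uIoc]) (by simp) (intervalIntegrable_iff.1 hf)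
      (intervalIntegrable_iff.1 hf2)
  rw [interval_average_eq, interval_average_eq, smul_eq_mul, smul_eq_mul] at jensen
  have hba : 0 < b - a := sub_pos.2 hab
  rw [mul_pow, inv_pow, ← div_eq_inv_mul, ← div_eq_inv_mul,
    div_le_div_iff₀ (by positivity) hba] at jensen
  nlinarith

theorem exists_mem_Ioc_mul_le_intervalIntegral {f : ℝ → ℝ} {a b : ℝ} (hab : a < b)
    (hf : IntervalIntegrable f volume a b) :
    ∃ x ∈ Ioc a b, (b - a) * f x ≤ ∫ t in a..b, f t := by
  have hvol : volume (uIoc a b) ≠ 0 := by simp [Real.volume_uIoc, sub_ne_zero.2 hab.ne']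
  obtain ⟨x, hx, hfx⟩ := exists_le_setAverage hvol (by simp [Real.volume_uIoc])
    (intervalIntegrable_iff.1 hf)
  rw [uIoc_of_le hab.le] at hx
  refine ⟨x, hx, ?_⟩
  have : f x ≤ (b - a)⁻¹ * ∫ t in a..b, f t := by
    simpa [interval_average_eq] using hfx
  rwa [← div_eq_inv_mul, le_div_iff₀ (sub_pos.2 hab), mul_comm] at this

section Curve

variable {E : Type*} [NormedAddCommGroup E] [NormedSpace ℝ E] {γ : ℝ → E}

theorem ContDiff.norm_sub_sq_le_mul_intervalIntegral [CompleteSpace E] (hγ : ContDiff ℝ 1 γ)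
    {x y : ℝ} (hxy : x ≤ y) :
    ‖γ y - γ x‖ ^ 2 ≤ (y - x) * ∫ t in x..y, ‖deriv γ t‖ ^ 2 := by
  have hγ' : Continuous (deriv γ) := hγ.continuous_deriv le_rfl
  have hlength : ‖γ y - γ x‖ ≤ ∫ t in x..y, ‖deriv γ t‖ := by
    rw [← integral_deriv_eq_sub (fun t _ => (hγ.differentiable one_ne_zero).differentiableAt)
      (hγ'.intervalIntegrable x y)]
    exact norm_integral_le_integral_norm hxy
  calc ‖γ y - γ x‖ ^ 2 ≤ (∫ t in x..y, ‖deriv γ t‖) ^ 2 := by gcongr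
    _ ≤ (y - x) * ∫ t in x..y, ‖deriv γ t‖ ^ 2 :=
      sq_intervalIntegral_le_mul_intervalIntegral_sq hxy (hγ'.norm.intervalIntegrable x y)
        ((hγ'.norm.pow 2).intervalIntegrable x y)

theorem ContDiff.norm_sub_sq_le_of_mem_Icc [CompleteSpace E] (hγ : ContDiff ℝ 1 γ)
    {a b x y : ℝ} (hx : x ∈ Icc a b) (hy : y ∈ Icc a b) :
    ‖γ y - γ x‖ ^ 2 ≤ (b - a) * ∫ t in a..b, ‖deriv γ t‖ ^ 2 := by
  wlog hxy : x ≤ y generalizing x y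
  · rw [norm_sub_rev]
    exact this hy hx (le_of_not_ge hxy)
  calc ‖γ y - γ x‖ ^ 2 ≤ (y - x) * ∫ t in x..y, ‖deriv γ t‖ ^ 2 :=
        hγ.norm_sub_sq_le_mul_intervalIntegral hxy
    _ ≤ (b - a) * ∫ t in a..b, ‖deriv γ t‖ ^ 2 := by
      refine mul_le_mul (by linarith [hx.1, hy.2]) ?_ ?_ (by linarith [hx.1, hx.2])
      · exact integral_mono_interval hx.1 hxy hy.2 (.of_forall fun _ => sq_nonneg _)
          (((hγ.continuous_deriv le_rfl).norm.pow 2).intervalIntegrable a b)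
      · exact integral_nonneg hxy fun t _ => by positivity

theorem ContDiff.norm_sub_le_of_intervalIntegral_le [CompleteSpace E] (hγ : ContDiff ℝ 1 γ)
    (p : E) {a b s ε : ℝ} (hab : a < b) (hs : s ∈ Icc a b) (hε : 0 ≤ ε)
    (henergy : (b - a) * ∫ t in a..b, ‖deriv γ t‖ ^ 2 ≤ ε ^ 2)
    (hdist : ∫ t in a..b, ‖γ t - p‖ ^ 2 ≤ (b - a) * ε ^ 2) :
    ‖γ s - p‖ ≤ 2 * ε := by
  obtain ⟨u, hu, hmean⟩ := exists_mem_Ioc_mul_le_intervalIntegral hab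
    (((hγ.continuous.sub continuous_const).norm.pow 2).intervalIntegrable a b)
  have hup : ‖γ u - p‖ ≤ ε := by
    rw [← pow_le_pow_iff_left₀ (norm_nonneg _) hε two_ne_zero]
    exact le_of_mul_le_mul_left (hmean.trans hdist) (sub_pos.2 hab)
  have hsu : ‖γ s - γ u‖ ≤ ε := by
    rw [← pow_le_pow_iff_left₀ (norm_nonneg _) hε two_ne_zero]
    exact (hγ.norm_sub_sq_le_of_mem_Icc (Ioc_subset_Icc_self hu) hs).trans henergy
  calc ‖γ s - p‖ ≤ ‖γ s - γ u‖ + ‖γ u - p‖ := norm_sub_le_norm_sub_add_norm_sub _ _ _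
    _ ≤ 2 * ε := by linarith

end Curve

theorem exists_mem_Icc_add_of_mem_Icc_zero_one {h s : ℝ} (h0 : 0 ≤ h) (h1 : h ≤ 1)
    (hs : s ∈ Icc (0 : ℝ) 1) : ∃ a, 0 ≤ a ∧ a + h ≤ 1 ∧ s ∈ Icc a (a + h) := by
  refine ⟨min s (1 - h), le_min hs.1 (by linarith), by linarith [min_le_right s (1 - h)],
    min_le_left _ _, ?_⟩
  rcases le_total s (1 - h) with hsh | hsh
  · rw [min_eq_left hsh]; linarith
  · rw [min_eq_right hsh]; linarith [hs.2]

/-- Step 1 of Proposition 4.2: for every energy bound `c` and every `δ > 0` there is a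
`τ > 0`, depending only on `c` and `δ`, such that any C¹ curve `γ` in any real Hilbert
space with `∫₀¹ ‖γ′‖² ≤ c` and `∫₀¹ ‖γ − p‖² ≤ τ²` has image of diameter at most `δ`
on `[0,1]`. -/
theorem small_L2_distance_implies_small_diameter
    (c : ℝ) (hc : 0 ≤ c) (δ : ℝ) (hδ : 0 < δ) :
    ∃ τ : ℝ, 0 < τ ∧
      ∀ (H : Type) [NormedAddCommGroup H] [InnerProductSpace ℝ H] [CompleteSpace H]
        (p : H) (γ : ℝ → H), ContDiff ℝ 1 γ →
        (∫ t in (0:ℝ)..1, ‖deriv γ t‖ ^ 2) ≤ c →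
        (∫ t in (0:ℝ)..1, ‖γ t - p‖ ^ 2) ≤ τ ^ 2 →
        ∀ s ∈ Set.Icc (0:ℝ) 1, ∀ t ∈ Set.Icc (0:ℝ) 1, ‖γ s - γ t‖ ≤ δ := by
  obtain ⟨ε, hε, hεδ⟩ : ∃ ε : ℝ, 0 < ε ∧ 2 * ε + 2 * ε ≤ δ := ⟨δ / 4, by positivity, by linarith⟩
  obtain ⟨h, h0, h1, hhc⟩ : ∃ h : ℝ, 0 < h ∧ h ≤ 1 ∧ h * c ≤ ε ^ 2 :=
    ⟨min 1 (ε ^ 2 / (c + 1)), by positivity, min_le_left _ _, by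
      calc min 1 (ε ^ 2 / (c + 1)) * c ≤ ε ^ 2 / (c + 1) * (c + 1) := by
            gcongr; exacts [min_le_right _ _, by linarith]
        _ = ε ^ 2 := div_mul_cancel₀ _ (by positivity)⟩
  refine ⟨ε * √h, by positivity, fun H _ _ _ p γ hγ hE hD => ?_⟩
  have hnear : ∀ s ∈ Icc (0 : ℝ) 1, ‖γ s - p‖ ≤ 2 * ε := by
    intro s hs
    obtain ⟨a, ha0, ha1, hsa⟩ := exists_mem_Icc_add_of_mem_Icc_zero_one h0.le h1 hs
    refine hγ.norm_sub_le_of_intervalIntegral_le p (by linarith) hsa (by positivity) ?_ ?_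
    · rw [add_sub_cancel_left]
      calc h * ∫ t in a..a + h, ‖deriv γ t‖ ^ 2 ≤ h * ∫ t in (0 : ℝ)..1, ‖deriv γ t‖ ^ 2 := by
            gcongr
            exact integral_mono_interval ha0 (by linarith) ha1 (.of_forall fun _ => sq_nonneg _)
              (((hγ.continuous_deriv le_rfl).norm.pow 2).intervalIntegrable 0 1)
        _ ≤ h * c := by gcongr
        _ ≤ ε ^ 2 := hhc
    · rw [add_sub_cancel_left]
      calc ∫ t in a..a + h, ‖γ t - p‖ ^ 2 ≤ ∫ t in (0 : ℝ)..1, ‖γ t - p‖ ^ 2 :=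
            integral_mono_interval ha0 (by linarith) ha1 (.of_forall fun _ => sq_nonneg _)
              (((hγ.continuous.sub continuous_const).norm.pow 2).intervalIntegrable 0 1)
        _ ≤ (ε * √h) ^ 2 := hD
        _ = h * ε ^ 2 := by rw [mul_pow, Real.sq_sqrt h0.le, mul_comm]
  intro s hs t ht
  linarith [norm_sub_le_norm_sub_add_norm_sub (γ s) p (γ t), norm_sub_rev p (γ t),
    hnear s hs, hnear t ht]
end

section
/- Let E be a real Banach space, X : E → E any map, δ > 0, T > 0, and g : ℝ → ℝ a continuous function with δ ≤ g(t) ≤ 1 for all t. Suppose y : ℝ → E is differentiable with ẏ(t) = g(t) • X(y(t)) for all t ∈ ℝ, and y(T) = y(0). Then there exist T′ with 0 < T′ ≤ T and a differentiable curve z : ℝ → E such that ż(t) = X(z(t)) for all t, z(0) = y(0), z(T′) = z(0), and z([0, T′]) = y([0, T]). In particular, if y is nonconstant on [0, T] then z is a nonconstant closed orbit of X with period at most T. -/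
/-!
Let `β s = ∫₀ˢ g`. Since `β' = g ≥ δ > 0`, `β` is an increasing bijection of `ℝ`, and the chain
rule turns `ẏ = g • X(y)` into `ż = X(z)` for `z = y ∘ β⁻¹`. The new period is `β T`, which is
positive and at most `T` because `0 < g ≤ 1`; `β⁻¹` maps `[0, β T]` onto `[0, T]`.
-/

open Set Filter

theorem surjective_of_hasDerivAt_ge {f f' : ℝ → ℝ} {δ : ℝ} (hδ : 0 < δ)
    (hf : ∀ x, HasDerivAt f (f' x) x) (hf' : ∀ x, δ ≤ f' x) : Function.Surjective f := by
  have hdiff : Differentiable ℝ f := fun x => (hf x).differentiableAt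
  have hgrowth : ∀ ⦃x y⦄, x ≤ y → δ * (y - x) ≤ f y - f x :=
    mul_sub_le_image_sub_of_le_deriv hdiff fun x => (hf' x).trans_eq (hf x).deriv.symm
  have hlin : Tendsto (fun x => f 0 + δ * x) atTop atTop :=
    tendsto_atTop_add_const_left _ _ (tendsto_id.const_mul_atTop hδ)
  have hlin' : Tendsto (fun x => f 0 + δ * x) atBot atBot :=
    tendsto_atBot_add_const_left _ _ (tendsto_id.const_mul_atBot hδ)
  refine hdiff.continuous.surjective (tendsto_atTop_mono' _ ?_ hlin)
    (tendsto_atBot_mono' _ ?_ hlin')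
  · filter_upwards [eventually_ge_atTop 0] with x hx
    linarith [hgrowth hx]
  · filter_upwards [eventually_le_atBot 0] with x hx
    linarith [hgrowth hx]

theorem Homeomorph.hasDerivAt_comp_symm_of_smul {E : Type*} [NormedAddCommGroup E]
    [NormedSpace ℝ E] (e : ℝ ≃ₜ ℝ) {y : ℝ → E} {c : ℝ} {v : E} {t : ℝ}
    (he : HasDerivAt e c (e.symm t)) (hc : c ≠ 0) (hy : HasDerivAt y (c • v) (e.symm t)) :
    HasDerivAt (y ∘ e.symm) v t := by
  have hsymm : HasDerivAt e.symm c⁻¹ t :=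
    he.of_local_left_inverse e.symm.continuous.continuousAt hc
      (Eventually.of_forall e.apply_symm_apply)
  simpa only [smul_smul, inv_mul_cancel₀ hc, one_smul] using hy.scomp t hsymm

/-- Sublemma 4.1 (time reparametrization): a closed orbit of the rescaled vector field
`g(t) • X` with `δ ≤ g ≤ 1` yields a genuine closed orbit of `X` of period at most `T`,
with the same initial point and the same image. -/
theorem reparametrized_closed_orbit
    {E : Type*} [NormedAddCommGroup E] [NormedSpace ℝ E]
    (X : E → E) (δ T : ℝ) (hδ : 0 < δ) (hT : 0 < T)
    (g : ℝ → ℝ) (hg : Continuous g) (hgb : ∀ t : ℝ, δ ≤ g t ∧ g t ≤ 1)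
    (y : ℝ → E) (hy : ∀ t : ℝ, HasDerivAt y (g t • X (y t)) t) (hyT : y T = y 0) :
    ∃ T' : ℝ, 0 < T' ∧ T' ≤ T ∧
      ∃ z : ℝ → E,
        (∀ t : ℝ, HasDerivAt z (X (z t)) t) ∧
        z 0 = y 0 ∧ z T' = z 0 ∧
        z '' Set.Icc 0 T' = y '' Set.Icc 0 T := by
  set β : ℝ → ℝ := fun s => ∫ u in (0 : ℝ)..s, g u
  have hβ : ∀ s, HasDerivAt β (g s) s := fun s => (hg.integral_hasStrictDerivAt 0 s).hasDerivAt
  have hgpos : ∀ s, 0 < g s := fun s => hδ.trans_le (hgb s).1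
  let e : ℝ ≃o ℝ := (strictMono_of_hasDerivAt_pos hβ hgpos).orderIsoOfSurjective β
    (surjective_of_hasDerivAt_ge hδ hβ fun s => (hgb s).1)
  have hβ0 : β 0 = 0 := intervalIntegral.integral_same
  have he0 : e 0 = 0 := hβ0
  have hβT : β T ≤ T := by
    simpa [hβ0] using image_sub_le_mul_sub_of_deriv_le (fun s => (hβ s).differentiableAt)
      (fun s => (hβ s).deriv.trans_le (hgb s).2) hT.le
  have hesymm0 : e.symm 0 = 0 := e.symm_apply_eq.mpr he0.symm
  refine ⟨e T, he0 ▸ e.strictMono hT, hβT, y ∘ e.symm, fun t => ?_, ?_, ?_, ?_⟩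
  · exact e.toHomeomorph.hasDerivAt_comp_symm_of_smul (hβ _) (hgpos _).ne' (hy _)
  · simp [hesymm0]
  · simp [hesymm0, hyT]
  · rw [image_comp, e.symm.image_Icc, e.symm_apply_apply, hesymm0]
end

section
/- For every natural number M there exists ε₀ > 0 with the following property. Let H be a real inner product space, V ⊆ H a linear subspace whose codimension is at most M (i.e. the quotient H/V has dimension ≤ M), and let 0 ≤ ε < ε₀. Then there do NOT exist vectors u₁, …, u_{M+1} ∈ H satisfying simultaneously: (i) 1 − ε ≤ ‖uᵢ‖² ≤ 1 for all i; (ii) |⟨uᵢ, uⱼ⟩| ≤ ε for all i ≠ j; (iii) |⟨v, uᵢ⟩| ≤ ε‖v‖ for all v ∈ V and all i. -/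
/-! If a combination `w = ∑ cⱼ uⱼ` lay in `V` with `c ≠ 0`, pick `i` with `|cᵢ|` maximal.
Almost orthonormality gives `|⟪w, uᵢ⟫| ≥ |cᵢ| (1 - (M + 1) ε)`, while almost orthogonality to `V`
gives `|⟪w, uᵢ⟫| ≤ ε ‖w‖ ≤ (M + 1) ε |cᵢ|`; for `ε < 1 / (2M + 2)` this is absurd. Hence the `uᵢ`
are linearly independent modulo `V`, which is impossible for `M + 1` vectors when
`dim (H ⧸ V) ≤ M`. -/

open Finset RealInnerProductSpace

section AlmostOrthonormal

variable {E : Type*} [NormedAddCommGroup E] {ι : Type*} [Fintype ι]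

lemma norm_sum_smul_le_card_mul [NormedSpace ℝ E] {u : ι → E} {c : ι → ℝ} {m : ℝ}
    (hu : ∀ j, ‖u j‖ ≤ 1) (hc : ∀ j, |c j| ≤ m) :
    ‖∑ j, c j • u j‖ ≤ Fintype.card ι * m :=
  calc ‖∑ j, c j • u j‖ ≤ ∑ j, ‖c j • u j‖ := norm_sum_le _ _
    _ ≤ ∑ _j : ι, m := sum_le_sum fun j _ => by
        rw [norm_smul, Real.norm_eq_abs]
        nlinarith [abs_nonneg (c j), norm_nonneg (u j), hu j, hc j]
    _ = Fintype.card ι * m := by simp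

variable [InnerProductSpace ℝ E]

lemma le_abs_inner_sum_smul [DecidableEq ι] (u : ι → E) {c : ι → ℝ} {i : ι} {ε : ℝ}
    (hc : ∀ j, |c j| ≤ |c i|) (hu : ∀ j, j ≠ i → |⟪u j, u i⟫| ≤ ε) :
    |c i| * (‖u i‖ ^ 2 - (Fintype.card ι - 1) * ε) ≤ |⟪∑ j, c j • u j, u i⟫| := by
  have hsplit : ⟪∑ j, c j • u j, u i⟫ =
      c i * ‖u i‖ ^ 2 + ∑ j ∈ univ.erase i, c j * ⟪u j, u i⟫ := by
    simp only [sum_inner, real_inner_smul_left, ← real_inner_self_eq_norm_sq]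
    exact (add_sum_erase _ _ (mem_univ i)).symm
  have htail : |∑ j ∈ univ.erase i, c j * ⟪u j, u i⟫| ≤ (Fintype.card ι - 1) * (|c i| * ε) :=
    calc |∑ j ∈ univ.erase i, c j * ⟪u j, u i⟫|
        ≤ ∑ j ∈ univ.erase i, |c j * ⟪u j, u i⟫| := abs_sum_le_sum_abs _ _
      _ ≤ (univ.erase i).card • (|c i| * ε) := sum_le_card_nsmul _ _ _ fun j hj => by
          rw [abs_mul]
          exact mul_le_mul (hc j) (hu j (ne_of_mem_erase hj)) (abs_nonneg _) (abs_nonneg _)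
      _ = (Fintype.card ι - 1) * (|c i| * ε) := by
          rw [card_erase_of_mem (mem_univ i), nsmul_eq_mul, card_univ,
            Nat.cast_pred (Fintype.card_pos_iff.mpr ⟨i⟩)]
  rw [hsplit]
  have := abs_sub_abs_le_abs_sub (c i * ‖u i‖ ^ 2) (-∑ j ∈ univ.erase i, c j * ⟪u j, u i⟫)
  rw [abs_neg, sub_neg_eq_add, abs_mul, abs_of_nonneg (sq_nonneg ‖u i‖)] at this
  linarith

lemma linearIndependent_mkQ_of_almostOrthonormal (V : Submodule ℝ E) (u : ι → E) {ε : ℝ}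
    (hε : 0 ≤ ε) (hει : 2 * Fintype.card ι * ε < 1)
    (hnorm : ∀ i, 1 - ε ≤ ‖u i‖ ^ 2 ∧ ‖u i‖ ^ 2 ≤ 1)
    (horth : ∀ i j, i ≠ j → |⟪u i, u j⟫| ≤ ε)
    (hV : ∀ v ∈ V, ∀ i, |⟪v, u i⟫| ≤ ε * ‖v‖) :
    LinearIndependent ℝ (V.mkQ ∘ u) := by
  classical
  rw [Fintype.linearIndependent_iff]
  intro c hc j
  have : Nonempty ι := ⟨j⟩
  obtain ⟨i, hi⟩ := Finite.exists_max fun j => |c j|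
  have hwV : ∑ j, c j • u j ∈ V := by
    rw [← Submodule.Quotient.mk_eq_zero, ← Submodule.mkQ_apply, map_sum]
    simpa using hc
  have hun : ∀ j, ‖u j‖ ≤ 1 := fun j => by
    nlinarith [(hnorm j).2, norm_nonneg (u j)]
  have hlow := le_abs_inner_sum_smul u hi fun j hj => horth j i hj
  have hup := (hV _ hwV i).trans
    (mul_le_mul_of_nonneg_left (norm_sum_smul_le_card_mul hun hi) hε)
  have hci : |c i| ≤ 0 := by nlinarith [(hnorm i).1, abs_nonneg (c i)]
  exact abs_nonpos_iff.mp ((hi j).trans hci)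

end AlmostOrthonormal

/-- Quantitative engine of Proposition 2.2: for every `M` there is `ε₀ > 0` such that no
real inner product space contains `M+1` vectors that are `ε`-almost orthonormal and
`ε`-almost orthogonal to a subspace of codimension at most `M`, for any `0 ≤ ε < ε₀`. -/
theorem no_almost_orthonormal_family_orthogonal_to_small_codim
    (M : ℕ) :
    ∃ ε₀ : ℝ, 0 < ε₀ ∧
      ∀ (H : Type) [NormedAddCommGroup H] [InnerProductSpace ℝ H]
        (V : Submodule ℝ H), FiniteDimensional ℝ (H ⧸ V) →
        Module.finrank ℝ (H ⧸ V) ≤ M →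
        ∀ ε : ℝ, 0 ≤ ε → ε < ε₀ →
          ¬ ∃ u : Fin (M + 1) → H,
              (∀ i, 1 - ε ≤ ‖u i‖ ^ 2 ∧ ‖u i‖ ^ 2 ≤ 1) ∧
              (∀ i j, i ≠ j → |(inner ℝ (u i) (u j) : ℝ)| ≤ ε) ∧
              (∀ v ∈ V, ∀ i, |(inner ℝ v (u i) : ℝ)| ≤ ε * ‖v‖) := by
  refine ⟨1 / (2 * (M + 1)), by positivity, ?_⟩
  rintro H _ _ V _ hV ε hε hεM ⟨u, hnorm, horth, hVu⟩
  have hε' : 2 * Fintype.card (Fin (M + 1)) * ε < 1 := by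
    rw [Fintype.card_fin, Nat.cast_succ]
    rwa [lt_div_iff₀' (by positivity)] at hεM
  have hcard := (linearIndependent_mkQ_of_almostOrthonormal V u hε hε' hnorm horth hVu)
    |>.fintype_card_le_finrank
  rw [Fintype.card_fin] at hcard
  omega
end

section
/- Let B = {x ∈ ℓ²(ℕ, ℝ) : |xᵢ| ≤ 1/2 for all i} and define H : B → ℝ by H(x) = exp(−∑ᵢ |xᵢ|/(1 − |xᵢ|)) when the series ∑ᵢ |xᵢ|/(1 − |xᵢ|) is summable, and H(x) = 0 otherwise (so that H(x) is the value of the infinite product ∏ᵢ exp(−|xᵢ|/(1 − |xᵢ|))). Then H(0) = 1, yet H is not continuous at 0: there is a sequence p(l) ∈ B with ‖p(l)‖_{ℓ²} → 0 and H(p(l)) = 0 for every l. -/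
/-! Since `|t| ≤ |t| / (1 - |t|)` for `|t| < 1`, the series defining `H` diverges, and `H`
vanishes, at every point of the cube that is not in `ℓ¹`. The vectors `(1 / (i + 2))ᵢ / (l + 1)`
are such points, and their `ℓ²` norms tend to `0`. -/

open scoped Classical in
/-- The infinite product `H = ∏ᵢ exp(−|xᵢ|/(1−|xᵢ|))` of the paper's Example 1.1:
its value is `exp(−∑ᵢ |xᵢ|/(1−|xᵢ|))` when the series is summable and `0` otherwise
(the divergent product has value `0`). -/
noncomputable def Hprod (x : lp (fun _ : ℕ => ℝ) 2) : ℝ :=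
  if Summable (fun i : ℕ => |(x : ∀ _ : ℕ, ℝ) i| / (1 - |(x : ∀ _ : ℕ, ℝ) i|)) then
    Real.exp (-∑' i : ℕ, |(x : ∀ _ : ℕ, ℝ) i| / (1 - |(x : ∀ _ : ℕ, ℝ) i|))
  else 0

lemma abs_le_abs_div_one_sub_abs {t : ℝ} (ht : |t| < 1) : |t| ≤ |t| / (1 - |t|) := by
  rw [le_div_iff₀ (by linarith)]
  nlinarith [abs_nonneg t]

theorem Hprod_zero : Hprod 0 = 1 := by
  simp [Hprod]

theorem Hprod_eq_zero_of_not_summable {x : lp (fun _ : ℕ => ℝ) 2} (hx : ∀ i, |x i| < 1)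
    (h : ¬ Summable x) : Hprod x = 0 :=
  if_neg fun hs => h <| summable_abs_iff.mp <| hs.of_nonneg_of_le (fun _ => abs_nonneg _)
    fun i => abs_le_abs_div_one_sub_abs (hx i)

lemma summable_one_div_add_two_sq : Summable fun i : ℕ => (1 / ((i : ℝ) + 2)) ^ 2 := by
  have := (summable_nat_add_iff 2).mpr (Real.summable_one_div_nat_pow.mpr one_lt_two)
  simpa using this

lemma not_summable_one_div_add_two : ¬ Summable fun i : ℕ => 1 / ((i : ℝ) + 2) := by
  have := Real.not_summable_one_div_natCast
  rw [← summable_nat_add_iff 2] at this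
  simpa only [Nat.cast_add, Nat.cast_ofNat] using this

noncomputable def harmonicLp : lp (fun _ : ℕ => ℝ) 2 :=
  ⟨fun i => 1 / ((i : ℝ) + 2), memℓp_gen (by simpa using summable_one_div_add_two_sq)⟩

lemma harmonicLp_apply (i : ℕ) : harmonicLp i = 1 / ((i : ℝ) + 2) := rfl

lemma abs_harmonicLp_le (i : ℕ) : |harmonicLp i| ≤ 1 / 2 := by
  rw [harmonicLp_apply, abs_of_pos (by positivity)]
  gcongr
  simp

lemma lp.abs_smul_apply_le {α : Type*} {p : ENNReal} {c : ℝ} (hc : |c| ≤ 1)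
    (x : lp (fun _ : α => ℝ) p) (i : α) : |(c • x) i| ≤ |x i| := by
  rw [lp.coeFn_smul, Pi.smul_apply, smul_eq_mul, abs_mul]
  exact mul_le_of_le_one_left (abs_nonneg _) hc

lemma lp.summable_smul_iff {α 𝕜 : Type*} [NormedField 𝕜] {p : ENNReal} {c : 𝕜} (hc : c ≠ 0)
    (x : lp (fun _ : α => 𝕜) p) : Summable ⇑(c • x) ↔ Summable x := by
  rw [lp.coeFn_smul]
  exact summable_mul_left_iff hc

/-- Example 1.1 (2): `H(0) = 1`, yet `H` is not continuous at `0` on the cube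
`B = {x : |xᵢ| ≤ 1/2}`: there are points `p(l) ∈ B` with `‖p(l)‖_{ℓ²} → 0` but
`H(p(l)) = 0` for every `l`. -/
theorem infinite_product_not_continuous_at_zero :
    Hprod 0 = 1 ∧
    ∃ p : ℕ → lp (fun _ : ℕ => ℝ) 2,
      (∀ l i, |(p l : ∀ _ : ℕ, ℝ) i| ≤ 1 / 2) ∧
      Filter.Tendsto (fun l => ‖p l‖) Filter.atTop (nhds 0) ∧
      ∀ l, Hprod (p l) = 0 := by
  have hc : ∀ l : ℕ, 0 < 1 / ((l : ℝ) + 1) := fun l => by positivity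
  have hc_le : ∀ l : ℕ, |1 / ((l : ℝ) + 1)| ≤ 1 := fun l => by
    rw [abs_of_pos (hc l)]
    exact div_le_one_of_le₀ (by simp) (by positivity)
  have habs : ∀ (l : ℕ) i, |((1 / ((l : ℝ) + 1)) • harmonicLp) i| ≤ 1 / 2 := fun l i =>
    (lp.abs_smul_apply_le (hc_le l) _ i).trans (abs_harmonicLp_le i)
  refine ⟨Hprod_zero, fun l => (1 / ((l : ℝ) + 1)) • harmonicLp, habs, ?_, fun l => ?_⟩
  · have := (tendsto_one_div_add_atTop_nhds_zero_nat (𝕜 := ℝ)).smul_const harmonicLp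
    simpa using this.norm
  · refine Hprod_eq_zero_of_not_summable (fun i => (habs l i).trans_lt (by norm_num)) ?_
    rw [lp.summable_smul_iff (hc l).ne']
    exact not_summable_one_div_add_two
end
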